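/- If every graph with no K_t-minor is f(t)-colorable, then every signed graph with no negative loop and with no K̃_t-minor admits a balanced f(t)-coloring. Equivalently, M(t) = SM(t) for all t, where M(t) is the largest k such that every graph of chromatic number at least t has a K_k-minor, and SM(t) is the largest k such that every signed graph with no negative loop and balanced chromatic number at least t has a K̃_k-minor. -/

import Mathlib

/-- A signed (multi)graph: an edge set with endpoints (an unordered pair,
possibly a loop) and a sign for each edge (`neg e = true` means `e` is negative). -/
structure SGraph (V : Type) where
  E : Type
  ends : E → Sym2 V
  neg : E → Bool

namespace SGraph

variable {V W : Type}

/-- Walks in a signed multigraph, recorded as sequences of edges. -/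
inductive Walk (G : SGraph V) : V → V → Type where
  | nil {v : V} : Walk G v v
  | cons {u v w : V} (e : G.E) (h : G.ends e = s(u, v)) (p : Walk G v w) : Walk G u w

namespace Walk

variable {G : SGraph V}

/-- The list of edges of a walk. -/
def edges : {u v : V} → G.Walk u v → List G.E
  | _, _, .nil => []
  | _, _, .cons e _ p => e :: p.edges

/-- The list of vertices visited by a walk (in order, with repetitions). -/
def support : {u v : V} → G.Walk u v → List V
  | u, _, .nil => [u]
  | u, _, .cons _ _ p => u :: p.support

/-- A walk is negative if it uses an odd number of negative edges
(its sign, the product of the signs of its edges with multiplicity, is `-1`). -/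
def isNeg {u v : V} (p : G.Walk u v) : Bool :=
  (p.edges.map G.neg).foldr Bool.xor false

/-- A closed walk is a cycle if it has at least one edge, no repeated edge,
and no repeated vertex (except the initial vertex which is also final). -/
def IsCycle {v : V} (p : G.Walk v v) : Prop :=
  p.edges ≠ [] ∧ p.edges.Nodup ∧ p.support.tail.Nodup

/-- The internal vertices of a walk. -/
def inner {u v : V} (p : G.Walk u v) : List V :=
  p.support.tail.dropLast

end Walk

/-- A set of vertices is balanced if it induces no negative cycle. -/
def BalancedSet (G : SGraph V) (X : Set V) : Prop :=
  ∀ (v : V) (p : G.Walk v v), p.IsCycle → (∀ u ∈ p.support, u ∈ X) → p.isNeg = false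

/-- A signed graph is balanced if it contains no negative cycle. -/
def IsBalanced (G : SGraph V) : Prop := G.BalancedSet Set.univ

/-- The signed graph has a negative loop. -/
def HasNegLoop (G : SGraph V) : Prop :=
  ∃ e : G.E, (∃ v : V, G.ends e = s(v, v)) ∧ G.neg e = true

/-- The signed graph has a positive loop. -/
def HasPosLoop (G : SGraph V) : Prop :=
  ∃ e : G.E, (∃ v : V, G.ends e = s(v, v)) ∧ G.neg e = false

/-- A balanced `k`-coloring: a partition of the vertices into `k` balanced color classes. -/
def ColorableB (G : SGraph V) (k : ℕ) : Prop :=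
  ∃ c : V → Fin k, ∀ i : Fin k, G.BalancedSet {v | c v = i}

/-- The balanced chromatic number. -/
noncomputable def chromNumB (G : SGraph V) : ℕ∞ :=
  ⨅ n ∈ {n : ℕ | G.ColorableB n}, (n : ℕ∞)

/-- Switching at the set of vertices where `s` is `true`: the sign of an edge is
multiplied by `-1` once for each of its endpoints (with multiplicity) in the set;
thus an edge with exactly one endpoint in the set changes sign, and loops are unchanged. -/
def switch (G : SGraph V) (s : V → Bool) : SGraph V where
  E := G.E
  ends := G.ends
  neg e := Bool.xor (G.neg e)
    (Sym2.lift ⟨fun u v => Bool.xor (s u) (s v), fun u v => Bool.xor_comm _ _⟩ (G.ends e))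

/-- The negation of a signature. -/
def negate (G : SGraph V) : SGraph V where
  E := G.E
  ends := G.ends
  neg e := !(G.neg e)

/-- A set of vertices is connected via positive edges inside itself. -/
def PosConnected (G : SGraph V) (B : Set V) : Prop :=
  B.Nonempty ∧ ∀ u ∈ B, ∀ v ∈ B, ∃ p : G.Walk u v,
    (∀ x ∈ p.support, x ∈ B) ∧ ∀ e ∈ p.edges, G.neg e = false

/-- `H` is a minor of `G`: after a suitable switching of `G`, there are disjoint
branch sets (each connected via positive edges) for the vertices of `H`, and
distinct edges of `G`, with the correct signs, realizing the edges of `H`. -/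
def IsMinor (H : SGraph W) (G : SGraph V) : Prop :=
  ∃ s : V → Bool, ∃ B : W → Set V,
    (∀ x : W, (G.switch s).PosConnected (B x)) ∧
    (Pairwise fun x y => Disjoint (B x) (B y)) ∧
    ∃ η : H.E → G.E, Function.Injective η ∧
      ∀ (e : H.E) (x y : W), H.ends e = s(x, y) →
        (G.switch s).neg (η e) = H.neg e ∧
        ∃ u v : V, G.ends (η e) = s(u, v) ∧ u ∈ B x ∧ v ∈ B y

/-- A homomorphism of signed graphs: after a suitable switching of the source,
a map of vertices and edges preserving incidences and signs. -/
def HomTo (G : SGraph V) (H : SGraph W) : Prop :=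
  ∃ s : V → Bool, ∃ f : V → W, ∃ g : G.E → H.E,
    ∀ (e : G.E) (u v : V), G.ends e = s(u, v) →
      H.ends (g e) = s(f u, f v) ∧ H.neg (g e) = (G.switch s).neg e

/-- A subdivision of `H` is isomorphic to a subgraph of `G` (signs ignored):
an injection of the vertices of `H` together with internally disjoint,
edge-disjoint paths of `G` realizing the edges of `H`. -/
def IsSubdivisionOf (H : SGraph W) (G : SGraph V) : Prop :=
  ∃ (φ : W → V) (ep : H.E → W × W),
    Function.Injective φ ∧
    (∀ e : H.E, H.ends e = s((ep e).1, (ep e).2)) ∧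
    ∃ P : (e : H.E) → G.Walk (φ (ep e).1) (φ (ep e).2),
      (∀ e, (P e).support.Nodup) ∧
      (∀ e f, e ≠ f → ∀ x ∈ (P e).inner, x ∉ (P f).support) ∧
      (∀ e, ∀ x ∈ (P e).inner, x ∉ Set.range φ) ∧
      (∀ e f, e ≠ f → ∀ g ∈ (P e).edges, g ∉ (P f).edges)

/-- `H` is a total topological minor of `G`: a subdivision of `H` occurs as a
subgraph of `G` in which the path representing each edge `e` of `H` has sign
exactly the sign of `e`. -/
def IsTotalTopMinor (H : SGraph W) (G : SGraph V) : Prop :=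
  ∃ (φ : W → V) (ep : H.E → W × W),
    Function.Injective φ ∧
    (∀ e : H.E, H.ends e = s((ep e).1, (ep e).2)) ∧
    ∃ P : (e : H.E) → G.Walk (φ (ep e).1) (φ (ep e).2),
      (∀ e, (P e).support.Nodup) ∧
      (∀ e f, e ≠ f → ∀ x ∈ (P e).inner, x ∉ (P f).support) ∧
      (∀ e, ∀ x ∈ (P e).inner, x ∉ Set.range φ) ∧
      (∀ e f, e ≠ f → ∀ g ∈ (P e).edges, g ∉ (P f).edges) ∧
      (∀ e, (P e).isNeg = H.neg e)

/-- `H` is a topological minor of `G`: some subdivision of `H` occurs as a subgraph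
of `G` in which every cycle of `H` keeps its sign; equivalently, after a suitable
switching of `H`, `H` is a total topological minor of `G`. -/
def IsTopMinor (H : SGraph W) (G : SGraph V) : Prop :=
  ∃ s : W → Bool, (H.switch s).IsTotalTopMinor G

end SGraph

open SGraph

/-- The signed graph `G̃` obtained from a graph `G` by replacing each edge by a
pair of parallel edges, one positive and one negative. -/
def SimpleGraph.tildeS {V : Type} (G : SimpleGraph V) : SGraph V where
  E := G.edgeSet × Bool
  ends e := (e.1 : Sym2 V)
  neg e := e.2

/-- The all-negative signed graph `(G, -)` on a graph `G`. -/
def SimpleGraph.allNeg {V : Type} (G : SimpleGraph V) : SGraph V where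
  E := G.edgeSet
  ends e := (e : Sym2 V)
  neg _ := true

/-- `K̃_k`: the signed graph on `k` vertices with a positive and a negative edge
between each pair of distinct vertices. -/
def tildeK (k : ℕ) : SGraph (Fin k) := (⊤ : SimpleGraph (Fin k)).tildeS

/-- `(K_k, -)`: the all-negative complete signed graph on `k` vertices. -/
def allNegK (k : ℕ) : SGraph (Fin k) := (⊤ : SimpleGraph (Fin k)).allNeg

/-- `K̃_k⁺`: as `K̃_k`, with in addition a positive loop at every vertex. -/
def tildeKplus (k : ℕ) : SGraph (Fin k) where
  E := ((⊤ : SimpleGraph (Fin k)).edgeSet × Bool) ⊕ Fin k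
  ends := Sum.elim (fun e => (e.1 : Sym2 (Fin k))) (fun i => s(i, i))
  neg := Sum.elim (fun e => e.2) (fun _ => false)

/-- `G` has a `K_k`-minor: `k` disjoint connected branch sets, pairwise joined by an edge. -/
def SimpleGraph.HasCliqueMinor {V : Type} (G : SimpleGraph V) (k : ℕ) : Prop :=
  ∃ T : Fin k → G.Subgraph,
    (∀ i, (T i).coe.Connected) ∧
    (Pairwise fun i j => Disjoint (T i).verts (T j).verts) ∧
    ∀ i j, i ≠ j → ∃ u v, G.Adj u v ∧ u ∈ (T i).verts ∧ v ∈ (T j).verts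

/-- `G` has an odd-`K_k`-minor: a 2-coloring of the vertices together with `k`
disjoint trees, all of whose edges are properly colored, pairwise joined by a
monochromatic edge. -/
def SimpleGraph.HasOddCliqueMinor {V : Type} (G : SimpleGraph V) (k : ℕ) : Prop :=
  ∃ c : V → Bool, ∃ T : Fin k → G.Subgraph,
    (∀ i, (T i).coe.IsTree) ∧
    (Pairwise fun i j => Disjoint (T i).verts (T j).verts) ∧
    (∀ i, ∀ u v, (T i).Adj u v → c u ≠ c v) ∧
    ∀ i j, i ≠ j →
      ∃ u v, G.Adj u v ∧ u ∈ (T i).verts ∧ v ∈ (T j).verts ∧ c u = c v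

/-- `G` has an even-odd-`K_k`-minor: as an odd-`K_k`-minor, with in addition a
properly colored edge between each pair of distinct trees. -/
def SimpleGraph.HasEvenOddCliqueMinor {V : Type} (G : SimpleGraph V) (k : ℕ) : Prop :=
  ∃ c : V → Bool, ∃ T : Fin k → G.Subgraph,
    (∀ i, (T i).coe.IsTree) ∧
    (Pairwise fun i j => Disjoint (T i).verts (T j).verts) ∧
    (∀ i, ∀ u v, (T i).Adj u v → c u ≠ c v) ∧
    ∀ i j, i ≠ j →
      (∃ u v, G.Adj u v ∧ u ∈ (T i).verts ∧ v ∈ (T j).verts ∧ c u = c v) ∧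
      (∃ u v, G.Adj u v ∧ u ∈ (T i).verts ∧ v ∈ (T j).verts ∧ c u ≠ c v)

/-- The fractional chromatic number of a finite graph: the infimum total weight of
a system of nonnegative weights on independent sets covering every vertex with
total weight at least 1. -/
noncomputable def SimpleGraph.fracChrom {V : Type} [Fintype V] [DecidableEq V]
    (G : SimpleGraph V) : ℝ :=
  sInf {r : ℝ | ∃ w : Finset V → ℝ, (∀ A, 0 ≤ w A) ∧
    (∀ A : Finset V, w A ≠ 0 → (∀ u ∈ A, ∀ v ∈ A, ¬G.Adj u v)) ∧
    (∀ v : V, 1 ≤ ∑ A : Finset V, if v ∈ A then w A else 0) ∧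
    ∑ A : Finset V, w A ≤ r}

/-- The fractional balanced chromatic number of a finite signed graph: the infimum
total weight of a system of nonnegative weights on balanced sets covering every
vertex with total weight at least 1. -/
noncomputable def SGraph.fracChromB {V : Type} [Fintype V] [DecidableEq V]
    (G : SGraph V) : ℝ :=
  sInf {r : ℝ | ∃ w : Finset V → ℝ, (∀ A, 0 ≤ w A) ∧
    (∀ A : Finset V, w A ≠ 0 → G.BalancedSet ↑A) ∧
    (∀ v : V, 1 ≤ ∑ A : Finset V, if v ∈ A then w A else 0) ∧
    ∑ A : Finset V, w A ≤ r}

/-- `M(t)`: the largest `k` such that every graph of chromatic number at least `t`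
has a `K_k`-minor. -/
noncomputable def M (t : ℕ) : ℕ :=
  sSup {k : ℕ | ∀ (m : ℕ) (G : SimpleGraph (Fin m)),
    (t : ℕ∞) ≤ G.chromaticNumber → G.HasCliqueMinor k}

/-- `SM(t)`: the largest `k` such that every signed graph with no negative loop and
balanced chromatic number at least `t` has a `K̃_k`-minor. -/
noncomputable def SM (t : ℕ) : ℕ :=
  sSup {k : ℕ | ∀ (m : ℕ) (G : SGraph (Fin m)),
    ¬ G.HasNegLoop → (t : ℕ∞) ≤ G.chromNumB → (tildeK k).IsMinor G}


/-!
Among the partitions of the vertices into connected parts inside which some switching makes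
every edge positive (singletons qualify, as there is no negative loop), take one with fewest
parts and switch accordingly. Two adjacent parts are then joined by edges of both signs: were
all edges between them of sign `τ`, switching one of them by `τ` would make their union
positive, and merging them would give fewer parts. Let `H` be the graph of parts. A proper
colouring of `H` is a balanced colouring of `G`, each colour class only containing edges inside
parts. A `K_k`-minor of `H` lifts to a `K̃_k`-minor of `G`: the union of the parts of a branch
set is positively connected, and each edge of `K_k` lifts to edges of both signs. Conversely,
the signed graph `G̃` of a graph `G` has no negative loop, is balanced `k`-colourable only if
`G` is `k`-colourable, and has a `K̃_k`-minor only if `G` has a `K_k`-minor; so `M(t) = SM(t)`.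
-/

lemma sym2_eq_of_pairwise_disjoint {V ι : Type*} {B : ι → Set V}
    (hB : Pairwise fun i j => Disjoint (B i) (B j)) {i j i' j' : ι} {u v u' v' : V}
    (h : s(u, v) = s(u', v')) (hu : u ∈ B i) (hv : v ∈ B j) (hu' : u' ∈ B i')
    (hv' : v' ∈ B j') : s(i, j) = s(i', j') := by
  have index_eq : ∀ {x i i'}, x ∈ B i → x ∈ B i' → i = i' := fun hx hx' =>
    hB.eq (Set.not_disjoint_iff.mpr ⟨_, hx, hx'⟩)
  rcases Sym2.eq_iff.mp h with ⟨rfl, rfl⟩ | ⟨rfl, rfl⟩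
  · rw [index_eq hu hu', index_eq hv hv']
  · rw [index_eq hu hv', index_eq hv hu', Sym2.eq_swap]

namespace SGraph

variable {V W : Type} {G : SGraph V}

lemma switch_neg (s : V → Bool) {e : G.E} {a b : V} (h : G.ends e = s(a, b)) :
    (G.switch s).neg e = xor (G.neg e) (xor (s a) (s b)) := by
  simp [switch, h]

lemma switch_xor_neg (s t : V → Bool) {e : G.E} {a b : V} (h : G.ends e = s(a, b)) :
    (G.switch fun v => xor (s v) (t v)).neg e = xor ((G.switch s).neg e) (xor (t a) (t b)) := by
  simp only [switch_neg _ h, Bool.xor_assoc, Bool.xor_left_comm (t a)]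

namespace Walk

def append : {u v w : V} → G.Walk u v → G.Walk v w → G.Walk u w
  | _, _, _, .nil, q => q
  | _, _, _, .cons e h p, q => .cons e h (p.append q)

@[simp] lemma edges_append {u v w : V} (p : G.Walk u v) (q : G.Walk v w) :
    (p.append q).edges = p.edges ++ q.edges := by
  induction p with
  | nil => rfl
  | cons e h p ih => simp [append, edges, ih]

lemma start_mem_support {u v : V} (p : G.Walk u v) : u ∈ p.support := by
  cases p <;> simp [support]

@[simp] lemma mem_support_append {u v w x : V} (p : G.Walk u v) (q : G.Walk v w) :
    x ∈ (p.append q).support ↔ x ∈ p.support ∨ x ∈ q.support := by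
  induction p with
  | nil =>
    simp only [append, support, List.mem_singleton, iff_or_self]
    rintro rfl
    exact q.start_mem_support
  | cons e h p ih => simp only [append, support, List.mem_cons, ih, or_assoc]

lemma ends_mem_support {u v a b : V} (p : G.Walk u v) {e : G.E} (he : e ∈ p.edges)
    (hab : G.ends e = s(a, b)) : a ∈ p.support ∧ b ∈ p.support := by
  induction p with
  | nil => simp [edges] at he
  | cons f h p ih =>
    rcases List.mem_cons.mp he with rfl | he
    · rw [h, Sym2.eq_iff] at hab
      rcases hab with ⟨rfl, rfl⟩ | ⟨rfl, rfl⟩ <;> simp [support, start_mem_support]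
    · obtain ⟨ha, hb⟩ := ih he
      exact ⟨by simp [support, ha], by simp [support, hb]⟩

lemma isNeg_eq_false {u v : V} (p : G.Walk u v) (h : ∀ e ∈ p.edges, G.neg e = false) :
    p.isNeg = false := by
  induction p with
  | nil => rfl
  | cons e he p ih =>
    simp only [edges, List.mem_cons, forall_eq_or_imp] at h
    simp only [isNeg, edges, List.map_cons, List.foldr_cons] at ih ⊢
    rw [h.1, ih h.2]
    rfl

def toSwitch (s : V → Bool) : {u v : V} → G.Walk u v → (G.switch s).Walk u v
  | _, _, .nil => .nil
  | _, _, .cons e h p => .cons e h (p.toSwitch s)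

@[simp] lemma edges_toSwitch (s : V → Bool) {u v : V} (p : G.Walk u v) :
    (p.toSwitch s).edges = p.edges := by
  induction p with
  | nil => rfl
  | cons e h p ih => exact congrArg (e :: ·) ih

@[simp] lemma support_toSwitch (s : V → Bool) {u v : V} (p : G.Walk u v) :
    (p.toSwitch s).support = p.support := by
  induction p with
  | nil => rfl
  | cons e h p ih => exact congrArg (_ :: ·) ih

lemma isNeg_toSwitch (s : V → Bool) {u v : V} (p : G.Walk u v) :
    (p.toSwitch s).isNeg = xor p.isNeg (xor (s u) (s v)) := by
  induction p with
  | nil => simp [toSwitch, isNeg, edges]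
  | cons e h p ih =>
    rename_i a b c
    change xor ((G.switch s).neg e) (p.toSwitch s).isNeg = xor (xor (G.neg e) p.isNeg) _
    rw [ih, switch_neg s h]
    cases G.neg e <;> cases p.isNeg <;> cases s a <;> cases s b <;> cases s c <;> rfl

end Walk

lemma balancedSet_of_switch_neg_eq_false {s : V → Bool} {X : Set V}
    (h : ∀ e a b, G.ends e = s(a, b) → a ∈ X → b ∈ X → (G.switch s).neg e = false) :
    G.BalancedSet X := by
  intro v p _ hpX
  have hsw := p.isNeg_toSwitch s
  rw [Bool.xor_self, Bool.xor_false] at hsw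
  rw [← hsw]
  refine (p.toSwitch s).isNeg_eq_false fun e he => ?_
  rw [Walk.edges_toSwitch] at he
  induction hab : G.ends e using Sym2.ind with
  | h a b =>
    obtain ⟨ha, hb⟩ := p.ends_mem_support he hab
    exact h e a b hab (hpX a ha) (hpX b hb)

def JoinedIn (G : SGraph V) (X : Set V) (P : G.E → Prop) (u v : V) : Prop :=
  ∃ p : G.Walk u v, (∀ x ∈ p.support, x ∈ X) ∧ ∀ e ∈ p.edges, P e

section JoinedIn

variable {X Y : Set V} {P Q : G.E → Prop} {u v w : V}

lemma joinedIn_refl (hu : u ∈ X) : G.JoinedIn X P u u :=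
  ⟨.nil, by simpa [Walk.support] using hu, by simp [Walk.edges]⟩

lemma joinedIn_of_ends {e : G.E} (he : G.ends e = s(u, v)) (hu : u ∈ X) (hv : v ∈ X)
    (hP : P e) : G.JoinedIn X P u v :=
  ⟨.cons e he .nil, by simp [Walk.support, hu, hv], by simp [Walk.edges, hP]⟩

lemma JoinedIn.trans (h₁ : G.JoinedIn X P u v) (h₂ : G.JoinedIn X P v w) :
    G.JoinedIn X P u w := by
  obtain ⟨p, hpX, hpP⟩ := h₁
  obtain ⟨q, hqX, hqP⟩ := h₂
  refine ⟨p.append q, fun x hx => ?_, fun e he => ?_⟩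
  · rcases (p.mem_support_append q).mp hx with hx | hx
    exacts [hpX x hx, hqX x hx]
  · rcases List.mem_append.mp (p.edges_append q ▸ he) with he | he
    exacts [hpP e he, hqP e he]

lemma JoinedIn.mono (h : G.JoinedIn X P u v) (hXY : X ⊆ Y)
    (hPQ : ∀ e a b, G.ends e = s(a, b) → a ∈ X → b ∈ X → P e → Q e) :
    G.JoinedIn Y Q u v := by
  obtain ⟨p, hpX, hpP⟩ := h
  refine ⟨p, fun x hx => hXY (hpX x hx), fun e he => ?_⟩
  induction hab : G.ends e using Sym2.ind with
  | h a b =>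
    obtain ⟨ha, hb⟩ := p.ends_mem_support he hab
    exact hPQ e a b hab (hpX a ha) (hpX b hb) (hpP e he)

lemma JoinedIn.mono_set (h : G.JoinedIn X P u v) (hXY : X ⊆ Y) : G.JoinedIn Y P u v :=
  h.mono hXY fun _ _ _ _ _ _ => id

lemma JoinedIn.toSwitch (s : V → Bool) (h : G.JoinedIn X P u v) :
    (G.switch s).JoinedIn X P u v := by
  obtain ⟨p, hpX, hpP⟩ := h
  exact ⟨p.toSwitch s, by simpa using hpX, fun e he => hpP e (p.edges_toSwitch s ▸ he)⟩

end JoinedIn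

/-- The parts of the partition are the fibres of `c`. -/
structure IsPosPartition (G : SGraph V) (c : V → W) (s : V → Bool) : Prop where
  joinedIn : ∀ v w, c v = c w → G.JoinedIn {x | c x = c v} ⊤ v w
  neg_eq_false : ∀ e x y, G.ends e = s(x, y) → c x = c y → (G.switch s).neg e = false

lemma isPosPartition_id (hG : ¬ G.HasNegLoop) : G.IsPosPartition id fun _ => false where
  joinedIn v w h := by
    cases h
    exact joinedIn_refl rfl
  neg_eq_false e x y hxy h := by
    cases h
    rw [switch_neg _ hxy]
    simpa [HasNegLoop] using fun h => hG ⟨e, ⟨x, hxy⟩, h⟩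

section Partition

variable {c : V → W} {s : V → Bool}

lemma IsPosPartition.joinedIn_pos (hc : G.IsPosPartition c s) {u w : V} (h : c u = c w) :
    G.JoinedIn {x | c x = c u} (fun e => (G.switch s).neg e = false) u w :=
  (hc.joinedIn u w h).mono le_rfl fun e a b hab ha hb _ =>
    hc.neg_eq_false e a b hab (ha.trans hb.symm)

def quotientGraph (G : SGraph V) (c : V → W) : SimpleGraph W where
  Adj p q := p ≠ q ∧ ∃ e x y, G.ends e = s(x, y) ∧ c x = p ∧ c y = q
  symm := ⟨fun _ _ ⟨hpq, e, x, y, h, hx, hy⟩ => ⟨hpq.symm, e, y, x, h.trans Sym2.eq_swap, hy, hx⟩⟩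
  loopless := ⟨fun _ h => h.1 rfl⟩

lemma IsPosPartition.colorableB_of_colorable (hc : G.IsPosPartition c s) {k : ℕ}
    (h : (G.quotientGraph c).Colorable k) : G.ColorableB k := by
  obtain ⟨C⟩ := h
  refine ⟨fun v => C (c v), fun i => balancedSet_of_switch_neg_eq_false (s := s) ?_⟩
  intro e a b hab ha hb
  refine hc.neg_eq_false e a b hab (by_contra fun hne => ?_)
  exact C.valid ⟨hne, e, a, b, hab, rfl, rfl⟩ (ha.trans hb.symm)

variable [DecidableEq W]

def mergeParts (c : V → W) (p q : W) (v : V) : W := if c v = q then p else c v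

lemma mergeParts_eq_left_iff {p q : W} {x : V} :
    mergeParts c p q x = p ↔ c x = p ∨ c x = q := by
  unfold mergeParts
  split_ifs with h <;> simp [h]

lemma mergeParts_of_ne {p q : W} {x : V} (h : mergeParts c p q x ≠ p) :
    mergeParts c p q x = c x :=
  if_neg fun hx => h (if_pos hx)

lemma card_image_mergeParts_lt [Fintype V] {a b : V} (hab : c a ≠ c b) :
    (Finset.univ.image (mergeParts c (c a) (c b))).card < (Finset.univ.image c).card := by
  have hb : c b ∈ Finset.univ.image c := Finset.mem_image_of_mem c (Finset.mem_univ b)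
  calc (Finset.univ.image (mergeParts c (c a) (c b))).card
      ≤ ((Finset.univ.image c).erase (c b)).card := by
        refine Finset.card_le_card fun p hp => ?_
        obtain ⟨v, -, rfl⟩ := Finset.mem_image.mp hp
        unfold mergeParts
        split_ifs with hv
        · exact Finset.mem_erase.mpr ⟨hab, Finset.mem_image_of_mem c (Finset.mem_univ a)⟩
        · exact Finset.mem_erase.mpr ⟨hv, Finset.mem_image_of_mem c (Finset.mem_univ v)⟩
    _ < (Finset.univ.image c).card := Finset.card_erase_lt_of_mem hb

variable {x₀ y₀ : V} {e₀ : G.E}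

lemma IsPosPartition.joinedIn_mergeParts (hc : G.IsPosPartition c s)
    (h₀ : G.ends e₀ = s(x₀, y₀)) (v w : V)
    (hvw : mergeParts c (c x₀) (c y₀) v = mergeParts c (c x₀) (c y₀) w) :
    G.JoinedIn {x | mergeParts c (c x₀) (c y₀) x = mergeParts c (c x₀) (c y₀) v} ⊤ v w := by
  set c' := mergeParts c (c x₀) (c y₀)
  have hjoin : ∀ {z}, c' z = c x₀ → G.JoinedIn {x | c' x = c x₀} ⊤ z x₀ ∧
      G.JoinedIn {x | c' x = c x₀} ⊤ x₀ z := by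
    have hA : {x | c x = c x₀} ⊆ {x | c' x = c x₀} := fun x hx =>
      mergeParts_eq_left_iff.mpr (Or.inl hx)
    have hB : {x | c x = c y₀} ⊆ {x | c' x = c x₀} := fun x hx =>
      mergeParts_eq_left_iff.mpr (Or.inr hx)
    have hedge : G.JoinedIn {x | c' x = c x₀} ⊤ x₀ y₀ :=
      joinedIn_of_ends h₀ (hA rfl) (hB rfl) trivial
    have hedge' : G.JoinedIn {x | c' x = c x₀} ⊤ y₀ x₀ :=
      joinedIn_of_ends (h₀.trans Sym2.eq_swap) (hB rfl) (hA rfl) trivial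
    intro z hz
    rcases mergeParts_eq_left_iff.mp hz with h | h
    · exact ⟨(hc.joinedIn z x₀ h).mono_set (h ▸ hA), (hc.joinedIn x₀ z h.symm).mono_set hA⟩
    · exact ⟨((hc.joinedIn z y₀ h).mono_set (h ▸ hB)).trans hedge',
        hedge.trans ((hc.joinedIn y₀ z h.symm).mono_set hB)⟩
  by_cases hv : c' v = c x₀
  · rw [hv]
    exact (hjoin hv).1.trans (hjoin (hvw ▸ hv)).2
  · have hw : c' w ≠ c x₀ := hvw ▸ hv
    have hcvw : c v = c w := by
      rw [← mergeParts_of_ne hv, ← mergeParts_of_ne hw]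
      exact hvw
    refine (hc.joinedIn v w hcvw).mono_set fun x (hx : c x = c v) => ?_
    change mergeParts c _ _ x = mergeParts c _ _ v
    rw [mergeParts, mergeParts, hx]

/-- If all edges from part `c x₀` to part `c y₀` have sign `τ`, switching the part `c y₀` by
`τ` makes the merged part positive. -/
lemma IsPosPartition.neg_eq_false_mergeParts (hc : G.IsPosPartition c s) {τ : Bool}
    (hτ : ∀ e x y, G.ends e = s(x, y) → c x = c x₀ → c y = c y₀ → (G.switch s).neg e = τ)
    (e : G.E) (x y : V) (hxy : G.ends e = s(x, y))
    (h : mergeParts c (c x₀) (c y₀) x = mergeParts c (c x₀) (c y₀) y) :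
    (G.switch fun v => xor (s v) (decide (c v = c y₀) && τ)).neg e = false := by
  rw [switch_xor_neg s _ hxy]
  by_cases hcxy : c x = c y
  · rw [hc.neg_eq_false e x y hxy hcxy, hcxy, Bool.xor_self, Bool.xor_false]
  have hx : mergeParts c (c x₀) (c y₀) x = c x₀ := by
    by_contra hx
    have hy : mergeParts c (c x₀) (c y₀) y ≠ c x₀ := h ▸ hx
    exact hcxy (by rw [← mergeParts_of_ne hx, ← mergeParts_of_ne hy, h])
  have hy : mergeParts c (c x₀) (c y₀) y = c x₀ := h ▸ hx
  rcases mergeParts_eq_left_iff.mp hx with hx | hx <;>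
    rcases mergeParts_eq_left_iff.mp hy with hy | hy
  · exact absurd (hx.trans hy.symm) hcxy
  · have hne : c x₀ ≠ c y₀ := hx ▸ hy ▸ hcxy
    rw [hτ e x y hxy hx hy, hx, hy]
    cases τ <;> simp [hne]
  · have hne : c x₀ ≠ c y₀ := hy ▸ hx ▸ Ne.symm hcxy
    rw [hτ e y x (hxy.trans Sym2.eq_swap) hy hx, hx, hy]
    cases τ <;> simp [hne]
  · exact absurd (hx.trans hy.symm) hcxy

lemma IsPosPartition.mergeParts (hc : G.IsPosPartition c s) (h₀ : G.ends e₀ = s(x₀, y₀))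
    {τ : Bool}
    (hτ : ∀ e x y, G.ends e = s(x, y) → c x = c x₀ → c y = c y₀ → (G.switch s).neg e = τ) :
    G.IsPosPartition (mergeParts c (c x₀) (c y₀))
      fun v => xor (s v) (decide (c v = c y₀) && τ) :=
  ⟨hc.joinedIn_mergeParts h₀, hc.neg_eq_false_mergeParts hτ⟩

end Partition

theorem exists_isPosPartition_forall_sign [Fintype V] [DecidableEq V] (hG : ¬ G.HasNegLoop) :
    ∃ (c : V → V) (s : V → Bool), G.IsPosPartition c s ∧
      ∀ p q, (G.quotientGraph c).Adj p q → ∀ σ, ∃ e x y, G.ends e = s(x, y) ∧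
        c x = p ∧ c y = q ∧ (G.switch s).neg e = σ := by
  obtain ⟨c, ⟨s, hcs⟩, hmin⟩ := Set.exists_min_image {c : V → V | ∃ s, G.IsPosPartition c s}
    (fun c => (Finset.univ.image c).card) (Set.toFinite _) ⟨id, _, isPosPartition_id hG⟩
  refine ⟨c, s, hcs, ?_⟩
  rintro _ _ ⟨hpq, e₀, x₀, y₀, h₀, rfl, rfl⟩ σ
  by_contra! hσ
  have hτ : ∀ e x y, G.ends e = s(x, y) → c x = c x₀ → c y = c y₀ → (G.switch s).neg e = !σ :=
    fun e x y hxy hx hy => Bool.eq_not.mpr (hσ e x y hxy hx hy)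
  exact (card_image_mergeParts_lt hpq).not_ge (hmin _ ⟨_, hcs.mergeParts h₀ hτ⟩)

theorem isMinor_tildeK_of_branchSets {k : ℕ} (s : V → Bool) (B : Fin k → Set V)
    (hB : ∀ i, (G.switch s).PosConnected (B i))
    (hdisj : Pairwise fun i j => Disjoint (B i) (B j))
    (hcross : ∀ i j, i ≠ j → ∀ σ, ∃ e u v, G.ends e = s(u, v) ∧ u ∈ B i ∧ v ∈ B j ∧
      (G.switch s).neg e = σ) :
    (tildeK k).IsMinor G := by
  have hedge : ∀ e : (tildeK k).E, ∃ g : G.E, (G.switch s).neg g = e.2 ∧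
      ∃ i j u v, (e.1 : Sym2 (Fin k)) = s(i, j) ∧ G.ends g = s(u, v) ∧ u ∈ B i ∧ v ∈ B j := by
    rintro ⟨⟨z, hz⟩, σ⟩
    induction z using Sym2.ind with
    | h i j =>
      obtain ⟨g, u, v, hg, hu, hv, hσ⟩ := hcross i j (by simpa using hz) σ
      exact ⟨g, hσ, i, j, u, v, rfl, hg, hu, hv⟩
  choose η hηsign hηends using hedge
  refine ⟨s, B, hB, hdisj, η, fun e₁ e₂ h => ?_, fun e x y hxy => ⟨hηsign e, ?_⟩⟩
  · obtain ⟨i₁, j₁, u₁, v₁, hz₁, hg₁, hu₁, hv₁⟩ := hηends e₁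
    obtain ⟨i₂, j₂, u₂, v₂, hz₂, hg₂, hu₂, hv₂⟩ := hηends e₂
    rw [h] at hg₁
    refine Prod.ext (Subtype.ext ?_) ?_
    · rw [hz₁, hz₂]
      exact sym2_eq_of_pairwise_disjoint hdisj (hg₁.symm.trans hg₂) hu₁ hv₁ hu₂ hv₂
    · rw [← hηsign e₁, h, hηsign e₂]
  · obtain ⟨i, j, u, v, hz, hg, hu, hv⟩ := hηends e
    rcases Sym2.eq_iff.mp (hz.symm.trans hxy) with ⟨rfl, rfl⟩ | ⟨rfl, rfl⟩
    · exact ⟨u, v, hg, hu, hv⟩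
    · exact ⟨v, u, hg.trans Sym2.eq_swap, hv, hu⟩

lemma isMinor_tildeK_of_le_one {k : ℕ} (hk : k ≤ 1) (v : Fin k → V) :
    (tildeK k).IsMinor G := by
  have : Subsingleton (Fin k) := Fin.subsingleton_iff_le_one.mpr hk
  refine isMinor_tildeK_of_branchSets (fun _ => false) (fun i => {v i})
    (fun i => ⟨⟨v i, rfl⟩, ?_⟩)
    (fun i j hij => absurd (Subsingleton.elim i j) hij)
    (fun i j hij => absurd (Subsingleton.elim i j) hij)
  rintro u rfl w rfl
  exact joinedIn_refl rfl

lemma IsPosPartition.joinedIn_preimage {c : V → W} {s : V → Bool} (hc : G.IsPosPartition c s)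
    (hpos : ∀ p q, (G.quotientGraph c).Adj p q → ∃ e x y, G.ends e = s(x, y) ∧
      c x = p ∧ c y = q ∧ (G.switch s).neg e = false)
    (T : (G.quotientGraph c).Subgraph) {a b : T.verts} (w : T.coe.Walk a b) {u v : V}
    (hu : c u = a) (hv : c v = b) :
    G.JoinedIn (c ⁻¹' T.verts) (fun e => (G.switch s).neg e = false) u v := by
  have hmem : ∀ {x : V} {a : T.verts}, c x = a → x ∈ c ⁻¹' T.verts := fun hx => by
    rw [Set.mem_preimage, hx]
    exact Subtype.prop _
  have hfibre : ∀ {u : V} {a : T.verts}, c u = a → {x | c x = c u} ⊆ c ⁻¹' T.verts :=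
    fun hu _ hx => hmem ((hx : c _ = _).trans hu)
  induction w generalizing u with
  | nil => exact (hc.joinedIn_pos (hu.trans hv.symm)).mono_set (hfibre hu)
  | cons hadj w ih =>
    obtain ⟨e, x, y, hxy, hx, hy, he⟩ := hpos _ _ (T.adj_sub hadj)
    exact ((hc.joinedIn_pos (hu.trans hx.symm)).mono_set (hfibre hu)).trans
      ((joinedIn_of_ends hxy (hmem hx) (hmem hy) he).trans (ih hy hv))

theorem IsPosPartition.isMinor_of_hasCliqueMinor {c : V → V} {s : V → Bool}
    (hc : G.IsPosPartition c s)
    (hsign : ∀ p q, (G.quotientGraph c).Adj p q → ∀ σ, ∃ e x y, G.ends e = s(x, y) ∧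
      c x = p ∧ c y = q ∧ (G.switch s).neg e = σ)
    {k : ℕ} (h : (G.quotientGraph c).HasCliqueMinor k) : (tildeK k).IsMinor G := by
  obtain ⟨T, hT, hdisj, hadj⟩ := h
  rcases le_or_gt k 1 with hk | hk
  · exact isMinor_tildeK_of_le_one hk fun i => (hT i).nonempty.some
  have hcross : ∀ i j, i ≠ j → ∀ σ, ∃ e u v, G.ends e = s(u, v) ∧ u ∈ c ⁻¹' (T i).verts ∧
      v ∈ c ⁻¹' (T j).verts ∧ (G.switch s).neg e = σ := by
    intro i j hij σ
    obtain ⟨p, q, hpq, hp, hq⟩ := hadj i j hij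
    obtain ⟨e, u, v, huv, rfl, rfl, he⟩ := hsign p q hpq σ
    exact ⟨e, u, v, huv, hp, hq, he⟩
  refine isMinor_tildeK_of_branchSets s (fun i => c ⁻¹' (T i).verts)
    (fun i => ⟨?_, fun u hu v hv => ?_⟩)
    (fun i j hij => (hdisj hij).preimage c) hcross
  · have : Nontrivial (Fin k) := Fin.nontrivial_iff_two_le.mpr hk
    obtain ⟨j, hji⟩ := exists_ne i
    obtain ⟨_, u, -, -, hu, -⟩ := hcross i j hji.symm false
    exact ⟨u, hu⟩
  · have w := ((hT i).preconnected ⟨_, hu⟩ ⟨_, hv⟩).some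
    exact (hc.joinedIn_preimage (fun p q h => hsign p q h false) (T i) w rfl rfl).toSwitch s

theorem exists_simpleGraph_colorable_hasCliqueMinor [Fintype V] [DecidableEq V]
    (hG : ¬ G.HasNegLoop) :
    ∃ H : SimpleGraph V, (∀ k, H.Colorable k → G.ColorableB k) ∧
      ∀ k, H.HasCliqueMinor k → (tildeK k).IsMinor G := by
  obtain ⟨c, s, hc, hsign⟩ := exists_isPosPartition_forall_sign hG
  exact ⟨G.quotientGraph c, fun _ => hc.colorableB_of_colorable,
    fun _ => hc.isMinor_of_hasCliqueMinor hsign⟩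

lemma chromNumB_le_chromaticNumber {H : SimpleGraph W}
    (h : ∀ k, H.Colorable k → G.ColorableB k) : G.chromNumB ≤ H.chromaticNumber :=
  le_iInf₂ fun n hn => iInf₂_le n (h n hn)

lemma chromaticNumber_le_chromNumB {H : SimpleGraph W}
    (h : ∀ k, G.ColorableB k → H.Colorable k) : H.chromaticNumber ≤ G.chromNumB :=
  le_iInf₂ fun n hn => iInf₂_le n (h n hn)

lemma Walk.reachable_induce {H : SimpleGraph V} (hGH : ∀ e a b, G.ends e = s(a, b) → H.Adj a b)
    {X : Set V} {u v : V} (p : G.Walk u v) (hp : ∀ x ∈ p.support, x ∈ X) (hu : u ∈ X)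
    (hv : v ∈ X) : ((⊤ : H.Subgraph).induce X).coe.Reachable ⟨u, hu⟩ ⟨v, hv⟩ := by
  induction p with
  | nil => rfl
  | cons e h p ih =>
    have hp' : ∀ x ∈ p.support, x ∈ X := fun x hx => hp x (List.mem_cons_of_mem _ hx)
    have hw := hp' _ p.start_mem_support
    have hadj : ((⊤ : H.Subgraph).induce X).coe.Adj ⟨_, hu⟩ ⟨_, hw⟩ := ⟨hu, hw, hGH e _ _ h⟩
    exact hadj.reachable.trans (ih hp' hw hv)

end SGraph

namespace SimpleGraph

variable {V : Type} (G : SimpleGraph V)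

lemma adj_of_tildeS_ends {e : G.tildeS.E} {u v : V} (h : G.tildeS.ends e = s(u, v)) :
    G.Adj u v :=
  G.mem_edgeSet.mp (h ▸ e.1.2)

lemma not_hasNegLoop_tildeS : ¬ G.tildeS.HasNegLoop :=
  fun ⟨_, ⟨v, hv⟩, _⟩ => G.loopless.irrefl v (G.adj_of_tildeS_ends hv)

lemma colorable_of_colorableB_tildeS {k : ℕ} (h : G.tildeS.ColorableB k) : G.Colorable k := by
  obtain ⟨c, hc⟩ := h
  refine ⟨Coloring.mk c fun {u v} huv hcuv => ?_⟩
  have he : s(u, v) ∈ G.edgeSet := huv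
  -- the two parallel edges over `uv` form a negative 2-cycle inside a colour class
  let p : G.tildeS.Walk u u :=
    .cons (⟨s(u, v), he⟩, true) rfl (.cons (⟨s(u, v), he⟩, false) Sym2.eq_swap .nil)
  have hcycle : p.IsCycle := by
    refine ⟨by simp [p, SGraph.Walk.edges], ?_, by simp [p, SGraph.Walk.support, huv.ne']⟩
    have hne : ((⟨s(u, v), he⟩, true) : G.edgeSet × Bool) ≠ (⟨s(u, v), he⟩, false) := by simp
    exact List.nodup_cons.mpr ⟨fun h => hne (List.mem_singleton.mp h), List.nodup_singleton _⟩
  have hp := hc (c u) u p hcycle (by simp [p, SGraph.Walk.support, hcuv])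
  exact nomatch (hp : true = false)

lemma hasCliqueMinor_of_isMinor_tildeS {k : ℕ} (h : (tildeK k).IsMinor G.tildeS) :
    G.HasCliqueMinor k := by
  obtain ⟨s, B, hB, hdisj, η, -, hη⟩ := h
  refine ⟨fun i => (⊤ : G.Subgraph).induce (B i), fun i => ?_, hdisj, fun i j hij => ?_⟩
  · obtain ⟨⟨v, hv⟩, hjoin⟩ := hB i
    have : Nonempty ((⊤ : G.Subgraph).induce (B i)).verts := ⟨⟨v, hv⟩⟩
    refine Connected.mk fun ⟨u, hu⟩ ⟨w, hw⟩ => ?_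
    obtain ⟨p, hp, -⟩ := hjoin u hu w hw
    exact p.reachable_induce (G := G.tildeS.switch s) (fun _ _ _ h => G.adj_of_tildeS_ends h) hp
      hu hw
  · obtain ⟨-, u, v, huv, hu, hv⟩ := hη (⟨s(i, j), by simpa using hij⟩, false) i j rfl
    exact ⟨u, v, G.adj_of_tildeS_ends huv, hu, hv⟩

end SimpleGraph

/-- if every `K_t`-minor-free graph is `f(t)`-colorable, then every
signed graph with no negative loop and no `K̃_t`-minor admits a balanced
`f(t)`-coloring; equivalently, `M(t) = SM(t)` for all `t`. -/
theorem stmt9 :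
    (∀ (f : ℕ → ℕ) (t : ℕ),
      (∀ (m : ℕ) (G : SimpleGraph (Fin m)), ¬ G.HasCliqueMinor t → G.Colorable (f t)) →
      ∀ (m : ℕ) (G : SGraph (Fin m)),
        ¬ G.HasNegLoop → ¬ (tildeK t).IsMinor G → G.ColorableB (f t)) ∧
    (∀ t : ℕ, M t = SM t) := by
  refine ⟨fun f t hf m G hG hminor => ?_, fun t => ?_⟩
  · obtain ⟨H, hcol, hmin⟩ := exists_simpleGraph_colorable_hasCliqueMinor hG
    exact hcol _ (hf m H fun h => hminor (hmin t h))
  · unfold M SM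
    congr 1
    ext k
    refine ⟨fun hk m G hG ht => ?_, fun hk m G ht => ?_⟩
    · obtain ⟨H, hcol, hmin⟩ := exists_simpleGraph_colorable_hasCliqueMinor hG
      exact hmin k (hk m H (ht.trans (chromNumB_le_chromaticNumber hcol)))
    · refine G.hasCliqueMinor_of_isMinor_tildeS (hk m G.tildeS G.not_hasNegLoop_tildeS ?_)
      exact ht.trans (chromaticNumber_le_chromNumB fun _ => G.colorable_of_colorableB_tildeS)
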